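/- arXiv:2105.11788 — 2 statements merged into one kernel-verified Lean document; each statement's English description precedes it below -/
import Mathlib

section
/- Let S be a set with a binary relation → ⊆ S × S, and let π_0, π_1, …, π_k be a sequence of partitions of S such that for each i < k there is a block C_i ∈ π_i with π_{i+1} equal to the split of π_i by pre(C_i). Then for every strong bisimulation R with R ⊆ ind(π_0) and every i ≤ k, we have R ⊆ ind(π_i); in particular, any two states related by a bisimulation contained in ind(π_0) lie in the same block of every π_i. -/
def IsPartition {S : Type*} (π : Set (Set S)) : Prop :=
  (∀ B ∈ π, B.Nonempty) ∧
  (∀ B ∈ π, ∀ B' ∈ π, B ≠ B' → Disjoint B B') ∧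
  ⋃₀ π = Set.univ

/-- A strong bisimulation for an unlabeled transition relation. -/
def IsBisimulation {S : Type*} (Tr : S → S → Prop) (R : S → S → Prop) : Prop :=
  Symmetric R ∧
  ∀ s t, R s t → ∀ s' : S, Tr s s' → ∃ t', Tr t t' ∧ R s' t'

def ind {S : Type*} (π : Set (Set S)) : S → S → Prop :=
  fun s t => ∃ B ∈ π, s ∈ B ∧ t ∈ B

def pre {S : Type*} (Tr : S → S → Prop) (C : Set S) : Set S :=
  {s | ∃ t ∈ C, Tr s t}

def splitBy {S : Type*} (π : Set (Set S)) (X : Set S) : Set (Set S) :=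
  ({B | ∃ B' ∈ π, B = B' ∩ X} ∪ {B | ∃ B' ∈ π, B = B' \ X}) \ {∅}

theorem refinement_sequence_preserves_bisimulations {S : Type*}
    (Tr : S → S → Prop) (k : ℕ) (π : ℕ → Set (Set S))
    (hpart : ∀ i ≤ k, IsPartition (π i))
    (hstep : ∀ i < k, ∃ C ∈ π i, π (i + 1) = splitBy (π i) (pre Tr C))
    (R : S → S → Prop) (hR : IsBisimulation Tr R)
    (hsub : ∀ s t, R s t → ind (π 0) s t) :
    ∀ i ≤ k, ∀ s t, R s t → ind (π i) s t := by
  intro i hi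
  induction i with
  | zero => exact hsub
  | succ n ih =>
    have hn : n ≤ k := Nat.le_of_succ_le hi
    have ihn := ih hn
    obtain ⟨C, hC, hsp⟩ := hstep n hi
    intro s t hst
    obtain ⟨B, hB, hsB, htB⟩ := ihn s t hst
    set X := pre Tr C with hX
    have key : ∀ a b, R a b → a ∈ X → b ∈ X := by
      rintro a b hab ⟨c, hcC, hac⟩
      obtain ⟨c', hbc', hcc'⟩ := hR.2 a b hab c hac
      obtain ⟨B', hB', hc, hc'⟩ := ihn c c' hcc'
      have hBC : B' = C := by
        by_contra hne
        exact (Set.disjoint_left.mp ((hpart n hn).2.1 B' hB' C hC hne) hc) hcC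
      exact ⟨c', hBC ▸ hc', hbc'⟩
    by_cases hsX : s ∈ X
    · have htX := key s t hst hsX
      refine ⟨B ∩ X, ?_, ⟨hsB, hsX⟩, ⟨htB, htX⟩⟩
      rw [hsp]
      refine ⟨Or.inl ⟨B, hB, rfl⟩, ?_⟩
      simp only [Set.mem_singleton_iff]
      exact Set.nonempty_iff_ne_empty.mp ⟨s, hsB, hsX⟩
    · have htX : t ∉ X := fun h => hsX (key t s (hR.1 hst) h)
      refine ⟨B \ X, ?_, ⟨hsB, hsX⟩, ⟨htB, htX⟩⟩
      rw [hsp]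
      refine ⟨Or.inr ⟨B, hB, rfl⟩, ?_⟩
      simp only [Set.mem_singleton_iff]
      exact Set.nonempty_iff_ne_empty.mp ⟨s, hsB, hsX⟩
end

section
/- Let S be a set with a binary relation → ⊆ S × S, and let π_0, π_1, …, π_z be a sequence of partitions of S such that for each i < z there is a block C_i ∈ π_i with π_{i+1} equal to the split of π_i by pre(C_i). If the final partition π_z is stable, then ind(π_z) is the coarsest bisimulation refining π_0: ind(π_z) is a strong bisimulation, ind(π_z) ⊆ ind(π_0), and every strong bisimulation R with R ⊆ ind(π_0) satisfies R ⊆ ind(π_z). -/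
def Reaches {S : Type*} (Tr : S → S → Prop) (s : S) (U : Set S) : Prop :=
  ∃ t ∈ U, Tr s t

def StableUnder {S : Type*} (Tr : S → S → Prop) (V U : Set S) : Prop :=
  (∀ s ∈ V, Reaches Tr s U) ∨ (∀ s ∈ V, ¬ Reaches Tr s U)

def PartitionStableUnder {S : Type*} (Tr : S → S → Prop)
    (π : Set (Set S)) (U : Set S) : Prop :=
  ∀ B ∈ π, StableUnder Tr B U

def StablePartition {S : Type*} (Tr : S → S → Prop) (π : Set (Set S)) : Prop :=
  ∀ C ∈ π, PartitionStableUnder Tr π C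

theorem stable_end_of_refinement_sequence_is_coarsest {S : Type*}
    (Tr : S → S → Prop) (z : ℕ) (π : ℕ → Set (Set S))
    (hpart : ∀ i ≤ z, IsPartition (π i))
    (hstep : ∀ i < z, ∃ C ∈ π i, π (i + 1) = splitBy (π i) (pre Tr C))
    (hstable : StablePartition Tr (π z)) :
    IsBisimulation Tr (ind (π z)) ∧
    (∀ s t, ind (π z) s t → ind (π 0) s t) ∧
    (∀ R : S → S → Prop, IsBisimulation Tr R →
      (∀ s t, R s t → ind (π 0) s t) → ∀ s t, R s t → ind (π z) s t) := by
  have hcoarse : ∀ i ≤ z, ∀ s t, ind (π i) s t → ind (π 0) s t := by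
    intro i
    induction i with
    | zero => intro _ s t h; exact h
    | succ i ih =>
      intro hiz s t hst
      obtain ⟨C, hC, heq⟩ := hstep i (lt_of_lt_of_le (Nat.lt_succ_self i) hiz)
      obtain ⟨B, hB, hs, ht⟩ := hst
      rw [heq] at hB
      rcases hB.1 with ⟨B', hB', rfl⟩ | ⟨B', hB', rfl⟩
      · exact ih (Nat.le_of_succ_le hiz) s t ⟨B', hB', hs.1, ht.1⟩
      · exact ih (Nat.le_of_succ_le hiz) s t ⟨B', hB', hs.1, ht.1⟩
  refine ⟨⟨?_, ?_⟩, hcoarse z le_rfl, ?_⟩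
  · rintro s t ⟨B, hB, hs, ht⟩
    exact ⟨B, hB, ht, hs⟩
  · rintro s t ⟨B, hB, hs, ht⟩ s' hTr
    have hcov := (hpart z le_rfl).2.2
    have hs' : s' ∈ ⋃₀ π z := by rw [hcov]; exact Set.mem_univ s'
    obtain ⟨C, hC, hs'C⟩ := hs'
    rcases hstable C hC B hB with h | h
    · obtain ⟨t', ht'C, hTt⟩ := h t ht
      exact ⟨t', hTt, C, hC, hs'C, ht'C⟩
    · exact absurd ⟨s', hs'C, hTr⟩ (h s hs)
  · intro R hR hR0
    have key : ∀ i ≤ z, ∀ s t, R s t → ind (π i) s t := by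
      intro i
      induction i with
      | zero => intro _; exact hR0
      | succ i ih =>
        intro hiz s t hst
        have hi : i ≤ z := Nat.le_of_succ_le hiz
        obtain ⟨C, hC, heq⟩ := hstep i (lt_of_lt_of_le (Nat.lt_succ_self i) hiz)
        obtain ⟨B, hB, hs, ht⟩ := ih hi s t hst
        have hdisj := (hpart i hi).2.1
        -- R-related states agree on membership in pre Tr C
        have hpre : ∀ a b, R a b → a ∈ pre Tr C → b ∈ pre Tr C := by
          rintro a b hab ⟨u, huC, hTau⟩
          obtain ⟨v, hTbv, huv⟩ := hR.2 a b hab u hTau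
          obtain ⟨B', hB', huB', hvB'⟩ := ih hi u v huv
          have : B' = C := by
            by_contra hne
            exact (hdisj B' hB' C hC hne).ne_of_mem huB' huC rfl
          exact ⟨v, this ▸ hvB', hTbv⟩
        rw [heq]
        by_cases hsx : s ∈ pre Tr C
        · have htx : t ∈ pre Tr C := hpre s t hst hsx
          refine ⟨B ∩ pre Tr C, ⟨Or.inl ⟨B, hB, rfl⟩, ?_⟩, ⟨hs, hsx⟩, ⟨ht, htx⟩⟩
          simp only [Set.mem_singleton_iff]
          exact Set.nonempty_iff_ne_empty.mp ⟨s, hs, hsx⟩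
        · have htx : t ∉ pre Tr C := fun h => hsx (hpre t s (hR.1 hst) h)
          refine ⟨B \ pre Tr C, ⟨Or.inr ⟨B, hB, rfl⟩, ?_⟩, ⟨hs, hsx⟩, ⟨ht, htx⟩⟩
          simp only [Set.mem_singleton_iff]
          exact Set.nonempty_iff_ne_empty.mp ⟨s, hs, hsx⟩
    exact key z le_rfl
end
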